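/- Let G be a finite p-group. For every abelian subgroup H of G, the number of maximal abelian subgroups of G containing H, reduced modulo p, equals 1; in particular this number is non-zero, so every abelian subgroup of G is contained in at least one maximal abelian subgroup, and if H is contained in a unique maximal abelian subgroup then that count is exactly 1. -/

import Mathlib

/-!
Induct on `H` downwards in the subgroup lattice. If `H` is maximal abelian the count is `1`.
Otherwise let `C = C_G(H)`: every abelian `A ≥ H` lies in `C`, and `H` is central in `C`, so
`C ⧸ H` is a nontrivial `p`-group. Count the pairs `(A, K)` with `A ≥ H` maximal abelian and
`K ≤ A ⧸ H` of order `p`. For fixed `A` there are `≡ 1 [MOD p]` such `K`, since in any group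
of order divisible by `p` the subgroups of order `p` number `≡ 1 [MOD p]` (McKay's rotation
argument counts the solutions of `x ^ p = 1`). For fixed `K` the preimage `L` of `K` in `C` is
abelian (cyclic modulo a central subgroup) and properly contains `H`, and the admissible `A` are
the maximal abelian subgroups containing `L`: `≡ 1 [MOD p]` of them by induction. Hence the count
is `≡` the number of subgroups of order `p` of `C ⧸ H`, which is `≡ 1 [MOD p]`.
-/

open Equiv.Perm in
theorem dvd_card_pow_eq_one_of_dvd_card {p : ℕ} [Fact p.Prime] {G : Type*} [Group G] [Finite G]
    (hdvd : p ∣ Nat.card G) : p ∣ Nat.card {x : G // x ^ p = 1} := by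
  classical
  have := Fintype.ofFinite G
  let rot : Function.End (vectorsProdEqOne G p) := fun v => VectorsProdEqOne.rotate v 1
  have rot_pow (k : ℕ) (v) : (rot ^ k) v = VectorsProdEqOne.rotate v k := by
    induction k generalizing v with
    | zero => exact (VectorsProdEqOne.rotate_zero v).symm
    | succ k ih =>
      rw [pow_succ, Function.End.mul_def, add_comm, ← VectorsProdEqOne.rotate_rotate]
      exact ih (rot v)
  have rot_pow_prime : rot ^ p ^ 1 = 1 :=
    funext fun v => by rw [pow_one, rot_pow, VectorsProdEqOne.rotate_length]; rfl
  -- the fixed points of the rotation are the constant vectors `(x, …, x)` with `x ^ p = 1`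
  have fixed_equiv : {x : G // x ^ p = 1} ≃ Function.fixedPoints rot := by
    refine Equiv.ofBijective (fun x => ⟨⟨List.Vector.replicate p x.1, ?_⟩, ?_⟩) ⟨?_, ?_⟩
    · exact (List.prod_replicate p x.1).trans x.2
    · exact Subtype.ext (Subtype.ext (List.rotate_replicate x.1 p 1))
    · intro x y hxy
      have := congrArg (fun v => v.1.1.toList) hxy
      exact Subtype.ext ((List.replicate_right_inj (Fact.out : p.Prime).ne_zero).mp this)
    · rintro ⟨v, hv⟩
      obtain ⟨a, ha⟩ := List.rotate_one_eq_self_iff_eq_replicate.mp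
        (congrArg (fun v => v.1.1) hv)
      rw [v.1.2] at ha
      refine ⟨⟨a, ?_⟩, Subtype.ext (Subtype.ext (Subtype.ext ha.symm))⟩
      rw [← List.prod_replicate, ← ha]
      exact v.2
  have hvec : p ∣ Fintype.card (vectorsProdEqOne G p) := by
    rw [VectorsProdEqOne.card, ← Nat.card_eq_fintype_card]
    exact hdvd.trans (dvd_pow_self _ (Nat.sub_ne_zero_of_lt (Fact.out : p.Prime).one_lt))
  rw [Nat.card_congr fixed_equiv, Nat.card_eq_fintype_card]
  exact (Nat.modEq_zero_iff_dvd.mp ((card_fixedPoints_modEq rot_pow_prime).symm.trans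
    (Nat.modEq_zero_iff_dvd.mpr hvec)))

theorem card_orderOf_eq_prime {p : ℕ} [hp : Fact p.Prime] {G : Type*} [Group G] [Finite G] :
    Nat.card {x : G // orderOf x = p} = Nat.card {K : Subgroup G // Nat.card K = p} * (p - 1) := by
  classical
  let gen : {x : G // orderOf x = p} → {K : Subgroup G // Nat.card K = p} :=
    fun x => ⟨Subgroup.zpowers x.1, by rw [Nat.card_zpowers, x.2]⟩
  have card_fiber : ∀ K, Nat.card {x // gen x = K} = p - 1 := by
    rintro ⟨K, hK⟩
    have fiber_equiv : {x // gen x = ⟨K, hK⟩} ≃ {y : K // y ≠ 1} :=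
      { toFun x := ⟨⟨x.1.1, (congrArg Subtype.val x.2).le (Subgroup.mem_zpowers x.1.1)⟩,
          fun h => hp.out.ne_one (by
            rw [← x.1.2, orderOf_eq_one_iff]; exact congrArg Subtype.val h)⟩
        invFun y :=
          have hy : orderOf (y.1 : G) = p := by
            rw [Subgroup.orderOf_coe]
            exact orderOf_eq_prime (by rw [← hK]; exact pow_card_eq_one') y.2
          ⟨⟨y.1, hy⟩, Subtype.ext (Subgroup.eq_of_le_of_card_ge (Subgroup.zpowers_le.mpr y.1.2)
            (by rw [Nat.card_zpowers, hy, hK]))⟩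
        left_inv _ := rfl
        right_inv _ := rfl }
    have := Fintype.ofFinite K
    rw [Nat.card_congr fiber_equiv, ← hK, Nat.card_eq_fintype_card, Nat.card_eq_fintype_card,
      Fintype.card_subtype_compl, Fintype.card_subtype_eq]
  have := Fintype.ofFinite {K : Subgroup G // Nat.card K = p}
  rw [← Nat.card_congr (Equiv.sigmaFiberEquiv gen), Nat.card_sigma]
  simp [card_fiber]

theorem card_subgroups_card_eq_prime_modEq_one {p : ℕ} [hp : Fact p.Prime] {G : Type*} [Group G]
    [Finite G] (hdvd : p ∣ Nat.card G) :
    Nat.card {K : Subgroup G // Nat.card K = p} ≡ 1 [MOD p] := by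
  have pow_eq_one_iff (x : G) : x ^ p = 1 ↔ x = 1 ∨ orderOf x = p := by
    rw [← orderOf_dvd_iff_pow_eq_one, Nat.dvd_prime hp.out, orderOf_eq_one_iff]
  have card_pow_eq_one : Nat.card {x : G // x ^ p = 1} = Nat.card {x : G // orderOf x = p} + 1 := by
    have : {x : G | x ^ p = 1} = insert 1 {x | orderOf x = p} := by
      ext x
      simp [pow_eq_one_iff]
    rw [← Set.coe_ofPred, Nat.card_coe_set_eq, this, Set.ncard_insert_of_notMem,
      ← Nat.card_coe_set_eq]
    · rfl
    · simpa using hp.out.ne_one.symm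
  -- `1 + (p - 1) * n ≡ 0 [MOD p]` for the number `n` of subgroups of order `p`
  have key := (ZMod.natCast_eq_zero_iff _ p).mpr (dvd_card_pow_eq_one_of_dvd_card hdvd)
  rw [card_pow_eq_one, card_orderOf_eq_prime, Nat.cast_add, Nat.cast_mul,
    Nat.cast_sub hp.out.one_le, ZMod.natCast_self, Nat.cast_one, zero_sub, mul_neg_one, neg_add_eq_zero] at key
  rw [← ZMod.natCast_eq_natCast_iff, key, Nat.cast_one]

theorem card_subgroups_le_card_eq_prime_modEq_one {p : ℕ} [Fact p.Prime] {G : Type*} [Group G]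
    [Finite G] {M : Subgroup G} (hdvd : p ∣ Nat.card M) :
    Nat.card {K : Subgroup G // K ≤ M ∧ Nat.card K = p} ≡ 1 [MOD p] := by
  have e : {K : Subgroup M // Nat.card K = p} ≃ {K : Subgroup G // K ≤ M ∧ Nat.card K = p} :=
    ((Subgroup.MapSubtype.orderIso M).toEquiv.subtypeEquiv fun K => by
      change _ ↔ Nat.card (K.map M.subtype) = p
      rw [Subgroup.card_map_of_injective M.subtype_injective]).trans
      (Equiv.subtypeSubtypeEquivSubtypeInter _ _)
  rw [← Nat.card_congr e]
  exact card_subgroups_card_eq_prime_modEq_one hdvd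

theorem card_rel_modEq_card_of_fibers_modEq_one {α β : Type*} [Finite α] [Finite β] {n : ℕ}
    (P : α → Prop) (Q : β → Prop) (r : α → β → Prop)
    (hP : ∀ a, P a → Nat.card {b // Q b ∧ r a b} ≡ 1 [MOD n]) :
    Nat.card {x : α × β // P x.1 ∧ Q x.2 ∧ r x.1 x.2} ≡ Nat.card {a // P a} [MOD n] := by
  have := Fintype.ofFinite {a // P a}
  let e : {x : α × β // P x.1 ∧ Q x.2 ∧ r x.1 x.2} ≃ Σ a : {a // P a}, {b // Q b ∧ r a b} :=
    { toFun x := ⟨⟨x.1.1, x.2.1⟩, ⟨x.1.2, x.2.2⟩⟩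
      invFun y := ⟨(y.1.1, y.2.1), y.1.2, y.2.2⟩
      left_inv _ := rfl
      right_inv _ := rfl }
  rw [Nat.card_congr e, Nat.card_sigma, ← ZMod.natCast_eq_natCast_iff, Nat.cast_sum]
  simp only [(ZMod.natCast_eq_natCast_iff _ _ _).mpr (hP _ (Subtype.prop _)), Nat.cast_one,
    Finset.sum_const, Finset.card_univ, nsmul_one, Nat.card_eq_fintype_card]

theorem card_modEq_card_of_fibers_modEq_one {α β : Type*} [Finite α] [Finite β] {n : ℕ}
    {P : α → Prop} {Q : β → Prop} (r : α → β → Prop)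
    (hP : ∀ a, P a → Nat.card {b // Q b ∧ r a b} ≡ 1 [MOD n])
    (hQ : ∀ b, Q b → Nat.card {a // P a ∧ r a b} ≡ 1 [MOD n]) :
    Nat.card {a // P a} ≡ Nat.card {b // Q b} [MOD n] := by
  have swap : {x : α × β // P x.1 ∧ Q x.2 ∧ r x.1 x.2} ≃
      {y : β × α // Q y.1 ∧ P y.2 ∧ r y.2 y.1} :=
    (Equiv.prodComm α β).subtypeEquiv fun x => by
      simp only [Equiv.prodComm_apply, Prod.fst_swap, Prod.snd_swap]; tauto
  have hQ' := card_rel_modEq_card_of_fibers_modEq_one Q P (fun b a => r a b) hQ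
  rw [← Nat.card_congr swap] at hQ'
  exact (card_rel_modEq_card_of_fibers_modEq_one P Q r hP).symm.trans hQ'

namespace Subgroup

variable {G : Type*} [Group G]

section Quotient

variable {H C : Subgroup G} [(H.subgroupOf C).Normal]

def preimageOfQuotient (K : Subgroup (C ⧸ H.subgroupOf C)) : Subgroup G :=
  (K.comap (QuotientGroup.mk' _)).map C.subtype

theorem le_preimageOfQuotient (hHC : H ≤ C) (K : Subgroup (C ⧸ H.subgroupOf C)) :
    H ≤ preimageOfQuotient K :=
  calc H = (H.subgroupOf C).map C.subtype := by rw [subgroupOf_map_subtype, inf_eq_left.mpr hHC]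
    _ ≤ preimageOfQuotient K :=
      map_mono ((QuotientGroup.ker_mk' (H.subgroupOf C)).symm.le.trans (ker_le_comap _ K))

theorem preimageOfQuotient_le_iff {A : Subgroup G} (hHA : H ≤ A)
    (K : Subgroup (C ⧸ H.subgroupOf C)) :
    preimageOfQuotient K ≤ A ↔ K ≤ (A.subgroupOf C).map (QuotientGroup.mk' _) := by
  rw [preimageOfQuotient, map_le_iff_le_comap, comap_subtype,
    ← comap_le_comap_of_surjective (QuotientGroup.mk'_surjective _), comap_map_eq,
    QuotientGroup.ker_mk', sup_eq_left.mpr (subgroupOf_mono C hHA)]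

theorem map_mk'_subgroupOf_eq_bot_iff {A : Subgroup G} (hAC : A ≤ C) :
    (A.subgroupOf C).map (QuotientGroup.mk' (H.subgroupOf C)) = ⊥ ↔ A ≤ H := by
  rw [map_eq_bot_iff, QuotientGroup.ker_mk', ← map_subtype_le_map_subtype, subgroupOf_map_subtype,
    subgroupOf_map_subtype, inf_eq_left.mpr hAC, le_inf_iff, and_iff_left hAC]

theorem preimageOfQuotient_le_iff_eq_bot (hHC : H ≤ C) (K : Subgroup (C ⧸ H.subgroupOf C)) :
    preimageOfQuotient K ≤ H ↔ K = ⊥ := by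
  rw [preimageOfQuotient_le_iff le_rfl, (map_mk'_subgroupOf_eq_bot_iff hHC).mpr le_rfl, le_bot_iff]

theorem isMulCommutative_preimageOfQuotient (hcen : H.subgroupOf C ≤ center C)
    (K : Subgroup (C ⧸ H.subgroupOf C)) [IsCyclic K] :
    IsMulCommutative (preimageOfQuotient K) := by
  have : IsMulCommutative (K.comap (QuotientGroup.mk' _)) := by
    refine ((QuotientGroup.mk' _).subgroupComap K).isMulCommutative_of_isCyclic_of_ker_le_center
      fun x hx => mem_center_iff.mpr fun y => Subtype.ext ?_
    have hx : (x : C) ∈ H.subgroupOf C :=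
      (QuotientGroup.eq_one_iff _).mp (congrArg Subtype.val hx)
    exact mem_center_iff.mp (hcen hx) y
  unfold preimageOfQuotient
  infer_instance

end Quotient

theorem le_centralizer_of_isMulCommutative {H A : Subgroup G} (hA : IsMulCommutative A)
    (hHA : H ≤ A) : A ≤ centralizer (H : Set G) :=
  (le_centralizer_iff_isMulCommutative.mpr hA).trans (centralizer_le hHA)

variable (H : Subgroup G)

theorem subgroupOf_centralizer_le_center :
    H.subgroupOf (centralizer (H : Set G)) ≤ center (centralizer (H : Set G)) :=
  fun x hx => mem_center_iff.mpr fun g => Subtype.ext (mem_centralizer_iff.mp g.2 x hx).symm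

instance normal_subgroupOf_centralizer : (H.subgroupOf (centralizer (H : Set G))).Normal :=
  ⟨fun n hn g => by
    rw [mem_subgroupOf, coe_mul, coe_mul, coe_inv, ← mem_centralizer_iff.mp g.2 n hn,
      mul_inv_cancel_right]
    exact hn⟩

end Subgroup

theorem Maximal.card_maximal_ge_eq_one {α : Type*} [PartialOrder α] {P : α → Prop} {x : α}
    (hx : Maximal P x) : Nat.card {a // x ≤ a ∧ Maximal P a} = 1 :=
  Nat.card_eq_one_iff_exists.mpr
    ⟨⟨x, le_rfl, hx⟩, fun a => Subtype.ext (le_antisymm (hx.2 a.2.2.1 a.2.1) a.2.1)⟩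

open Subgroup in
theorem IsPGroup.card_maximal_isMulCommutative_ge_modEq_one {p : ℕ} [Fact p.Prime] {G : Type*}
    [Group G] [Finite G] (hG : IsPGroup p G) (H : Subgroup G) (hH : IsMulCommutative H) :
    Nat.card {A : Subgroup G // H ≤ A ∧ Maximal (fun B : Subgroup G => IsMulCommutative B) A}
      ≡ 1 [MOD p] := by
  induction H using WellFoundedGT.induction with
  | ind H IH =>
  by_cases hmax : Maximal (fun B : Subgroup G => IsMulCommutative B) H
  · rw [hmax.card_maximal_ge_eq_one]
  have hHC := le_centralizer_of_isMulCommutative hH le_rfl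
  have dvd_card_map {A : Subgroup G} (hA : IsMulCommutative A) (hHA : H ≤ A) (hAH : ¬ A ≤ H) :
      p ∣ Nat.card ((A.subgroupOf (centralizer H)).map (QuotientGroup.mk' _)) :=
    (((hG.to_subgroup _).to_quotient _).to_subgroup _).card_eq_or_dvd.resolve_left
      (card_eq_one.not.mpr ((map_mk'_subgroupOf_eq_bot_iff
        (le_centralizer_of_isMulCommutative hA hHA)).not.mpr hAH))
  obtain ⟨B, hHB, hB⟩ :=
    exists_gt_of_not_maximal (P := fun B : Subgroup G => IsMulCommutative B) hH hmax
  calc Nat.card {A : Subgroup G // H ≤ A ∧ Maximal (fun B : Subgroup G => IsMulCommutative B) A}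
      ≡ Nat.card {K : Subgroup (centralizer (H : Set G) ⧸ H.subgroupOf (centralizer H)) //
          Nat.card K = p} [MOD p] := by
        refine card_modEq_card_of_fibers_modEq_one (fun A K => preimageOfQuotient K ≤ A) ?_ ?_
        · rintro A ⟨hHA, hA⟩
          have hAH : ¬ A ≤ H := fun hAH => hmax (le_antisymm hAH hHA ▸ hA)
          rw [Nat.card_congr (Equiv.subtypeEquivRight fun K => by
            rw [preimageOfQuotient_le_iff hHA, and_comm])]
          exact card_subgroups_le_card_eq_prime_modEq_one (dvd_card_map hA.1 hHA hAH)
        · intro K hK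
          have : IsCyclic K := isCyclic_of_prime_card hK
          have hHK : H < preimageOfQuotient K := (le_preimageOfQuotient hHC K).lt_of_not_ge
            ((preimageOfQuotient_le_iff_eq_bot hHC K).not.mpr fun hK1 =>
              (Fact.out : p.Prime).ne_one (hK.symm.trans (card_eq_one.mpr hK1)))
          have fiber_iff (A : Subgroup G) :
              ((H ≤ A ∧ Maximal (fun B : Subgroup G => IsMulCommutative B) A) ∧
                preimageOfQuotient K ≤ A) ↔
              (preimageOfQuotient K ≤ A ∧ Maximal (fun B : Subgroup G => IsMulCommutative B) A) :=
            ⟨fun h => ⟨h.2, h.1.2⟩, fun h => ⟨⟨hHK.le.trans h.1, h.2⟩, h.1⟩⟩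
          rw [Nat.card_congr (Equiv.subtypeEquivRight fiber_iff)]
          exact IH _ hHK
            (isMulCommutative_preimageOfQuotient (subgroupOf_centralizer_le_center H) K)
    _ ≡ 1 [MOD p] := card_subgroups_card_eq_prime_modEq_one
      ((dvd_card_map hB hHB.le hHB.not_ge).trans (card_subgroup_dvd_card _))

theorem maximal_abelian_over_count_facts {p : ℕ} (hp : p.Prime) {G : Type*} [Group G]
    [Finite G] (hG : IsPGroup p G) (H : Subgroup G) (hH : IsMulCommutative H) :
    Nat.card {A : Subgroup G // H ≤ A ∧ Maximal (fun B : Subgroup G => IsMulCommutative B) A} % p = 1 ∧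
    Nat.card {A : Subgroup G // H ≤ A ∧ Maximal (fun B : Subgroup G => IsMulCommutative B) A} ≠ 0 ∧
    (∃ A : Subgroup G, H ≤ A ∧ Maximal (fun B : Subgroup G => IsMulCommutative B) A) ∧
    ((∃! A : Subgroup G, H ≤ A ∧ Maximal (fun B : Subgroup G => IsMulCommutative B) A) →
      Nat.card {A : Subgroup G // H ≤ A ∧ Maximal (fun B : Subgroup G => IsMulCommutative B) A} = 1) := by
  have := Fact.mk hp
  have hmod : Nat.card {A : Subgroup G // H ≤ A ∧
      Maximal (fun B : Subgroup G => IsMulCommutative B) A} % p = 1 :=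
    Eq.trans (hG.card_maximal_isMulCommutative_ge_modEq_one H hH) (Nat.mod_eq_of_lt hp.one_lt)
  have hne : Nat.card {A : Subgroup G // H ≤ A ∧
      Maximal (fun B : Subgroup G => IsMulCommutative B) A} ≠ 0 := fun h => by simp [h] at hmod
  refine ⟨hmod, hne, nonempty_subtype.mp (Nat.card_ne_zero.mp hne).1, ?_⟩
  rintro ⟨A, hA, hA_unique⟩
  exact Nat.card_eq_one_iff_exists.mpr ⟨⟨A, hA⟩, fun B => Subtype.ext (hA_unique B.1 B.2)⟩
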